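/- arXiv:2109.00076 — 2 statements merged into one kernel-verified Lean document; each statement's English description precedes it below -/
import Mathlib

section
/- Let q₀, q₁, q₂ ∈ ℝ² be points with positive signed area A := ½ det[q₁ − q₀, q₂ − q₁] > 0, and edge lengths E₀ := ‖q₁ − q₂‖, E₁ := ‖q₂ − q₀‖, E₂ := ‖q₀ − q₁‖. Then the isoperimetric inequality for triangles holds: A ≤ (E₀ + E₁ + E₂)² / (12√3). -/
/-- isoperimetric inequality for triangles: For a triangle in `ℝ²`
with positive signed area `A` and edge lengths `E₀, E₁, E₂`,
`A ≤ (E₀ + E₁ + E₂)² / (12√3)`. -/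
theorem triangle_isoperimetric_inequality
    (q₀ q₁ q₂ : EuclideanSpace ℝ (Fin 2)) (A : ℝ)
    (hA : A = (1 / 2) * ((q₁ - q₀) 0 * (q₂ - q₁) 1 - (q₁ - q₀) 1 * (q₂ - q₁) 0))
    (hApos : 0 < A)
    (E₀ E₁ E₂ : ℝ)
    (hE₀ : E₀ = ‖q₁ - q₂‖) (hE₁ : E₁ = ‖q₂ - q₀‖) (hE₂ : E₂ = ‖q₀ - q₁‖) :
    A ≤ (E₀ + E₁ + E₂) ^ 2 / (12 * Real.sqrt 3) := by
  set ux := (q₁ - q₀) 0 with hux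
  set uy := (q₁ - q₀) 1 with huy
  set vx := (q₂ - q₁) 0 with hvx
  set vy := (q₂ - q₁) 1 with hvy
  have hE0sq : E₀ ^ 2 = vx ^ 2 + vy ^ 2 := by
    rw [hE₀, ← norm_neg, neg_sub, EuclideanSpace.norm_eq,
      Real.sq_sqrt (by positivity)]
    simp [Fin.sum_univ_two, hvx, hvy]
  have hE1sq : E₁ ^ 2 = (ux + vx) ^ 2 + (uy + vy) ^ 2 := by
    have h : q₂ - q₀ = (q₁ - q₀) + (q₂ - q₁) := by abel
    rw [hE₁, h, EuclideanSpace.norm_eq, Real.sq_sqrt (by positivity)]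
    simp [Fin.sum_univ_two, hux, huy, hvx, hvy]
  have hE2sq : E₂ ^ 2 = ux ^ 2 + uy ^ 2 := by
    rw [hE₂, ← norm_neg, neg_sub, EuclideanSpace.norm_eq,
      Real.sq_sqrt (by positivity)]
    simp [Fin.sum_univ_two, hux, huy]
  have hE0 : 0 ≤ E₀ := hE₀ ▸ norm_nonneg _
  have hE1 : 0 ≤ E₁ := hE₁ ▸ norm_nonneg _
  have hE2 : 0 ≤ E₂ := hE₂ ▸ norm_nonneg _
  -- Heron: 16 A² = 2(a²b² + b²c² + c²a²) - a⁴ - b⁴ - c⁴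
  have heron : 16 * A ^ 2 =
      2 * (E₀ ^ 2 * E₁ ^ 2 + E₁ ^ 2 * E₂ ^ 2 + E₂ ^ 2 * E₀ ^ 2)
        - E₀ ^ 4 - E₁ ^ 4 - E₂ ^ 4 := by
    have h0 : E₀ ^ 4 = (E₀ ^ 2) ^ 2 := by ring
    have h1 : E₁ ^ 4 = (E₁ ^ 2) ^ 2 := by ring
    have h2 : E₂ ^ 4 = (E₂ ^ 2) ^ 2 := by ring
    rw [h0, h1, h2, hE0sq, hE1sq, hE2sq, hA]
    ring
  -- key inequality: 432 A² ≤ (E₀+E₁+E₂)⁴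
  have key : 432 * A ^ 2 ≤ (E₀ + E₁ + E₂) ^ 4 := by
    nlinarith [sq_nonneg (E₀ - E₁), sq_nonneg (E₁ - E₂), sq_nonneg (E₂ - E₀),
      sq_nonneg (E₀ + E₁ - E₂), sq_nonneg (E₁ + E₂ - E₀), sq_nonneg (E₂ + E₀ - E₁),
      mul_nonneg hE0 hE1, mul_nonneg hE1 hE2, mul_nonneg hE2 hE0,
      sq_nonneg ((E₀ - E₁) * (E₁ - E₂)), sq_nonneg ((E₁ - E₂) * (E₂ - E₀)),
      sq_nonneg ((E₂ - E₀) * (E₀ - E₁)), sq_nonneg (E₀ + E₁ + E₂)]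
  have hs3 : Real.sqrt 3 > 0 := Real.sqrt_pos.mpr (by norm_num)
  have hs3sq : Real.sqrt 3 ^ 2 = 3 := Real.sq_sqrt (by norm_num)
  rw [le_div_iff₀ (by positivity)]
  have hsq : (A * (12 * Real.sqrt 3)) ^ 2 ≤ ((E₀ + E₁ + E₂) ^ 2) ^ 2 := by
    have : (A * (12 * Real.sqrt 3)) ^ 2 = 432 * A ^ 2 := by
      rw [mul_pow, mul_pow]; rw [hs3sq]; ring
    rw [this]
    calc 432 * A ^ 2 ≤ (E₀ + E₁ + E₂) ^ 4 := key
      _ = ((E₀ + E₁ + E₂) ^ 2) ^ 2 := by ring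
  exact (pow_le_pow_iff_left₀ (by positivity) (by positivity) two_ne_zero).mp hsq
end

section
/- Let q₀, q₁, q₂ ∈ ℝ² be points with positive signed area A := ½ det[q₁ − q₀, q₂ − q₁] > 0, edge lengths E₀ := ‖q₁ − q₂‖, E₁ := ‖q₂ − q₀‖, E₂ := ‖q₀ − q₁‖, and quality measure q := (E₀² + E₁² + E₂²)/(4√3 · A). Then every edge length is bounded below in terms of the longest edge and the quality: for each ℓ ∈ {0, 1, 2}, Eℓ ≥ max{E₀, E₁, E₂} / (2√3 · q). -/
set_option maxHeartbeats 1000000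

/-- For a triangle in `ℝ²` with positive signed area `A`, edge
lengths `E₀, E₁, E₂` and quality measure `q = (E₀² + E₁² + E₂²) / (4√3 A)`,
every edge length is bounded below by `max {E₀, E₁, E₂} / (2√3 q)`. -/
theorem triangle_edge_lower_bound_via_quality
    (q₀ q₁ q₂ : EuclideanSpace ℝ (Fin 2)) (A : ℝ)
    (hA : A = (1 / 2) * ((q₁ - q₀) 0 * (q₂ - q₁) 1 - (q₁ - q₀) 1 * (q₂ - q₁) 0))
    (hApos : 0 < A)
    (E₀ E₁ E₂ : ℝ)
    (hE₀ : E₀ = ‖q₁ - q₂‖) (hE₁ : E₁ = ‖q₂ - q₀‖) (hE₂ : E₂ = ‖q₀ - q₁‖)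
    (q : ℝ) (hq : q = (E₀ ^ 2 + E₁ ^ 2 + E₂ ^ 2) / (4 * Real.sqrt 3 * A)) :
    max E₀ (max E₁ E₂) / (2 * Real.sqrt 3 * q) ≤ E₀ ∧
      max E₀ (max E₁ E₂) / (2 * Real.sqrt 3 * q) ≤ E₁ ∧
        max E₀ (max E₁ E₂) / (2 * Real.sqrt 3 * q) ≤ E₂ := by
  have sub0 : ∀ x y : EuclideanSpace ℝ (Fin 2), ∀ i, (x - y) i = x i - y i :=
    fun x y i => rfl
  have hn : ∀ x : EuclideanSpace ℝ (Fin 2), ‖x‖ ^ 2 = (x 0) ^ 2 + (x 1) ^ 2 := by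
    intro x
    rw [EuclideanSpace.norm_eq, Real.sq_sqrt (by positivity)]
    simp [Fin.sum_univ_two]
  obtain ⟨u0, u1, v0, v1, w0, w1, hu0, hu1, hv0, hv1, hw0, hw1⟩ :
      ∃ u0 u1 v0 v1 w0 w1 : ℝ, q₀ 0 = u0 ∧ q₀ 1 = u1 ∧ q₁ 0 = v0 ∧ q₁ 1 = v1 ∧
        q₂ 0 = w0 ∧ q₂ 1 = w1 := ⟨_, _, _, _, _, _, rfl, rfl, rfl, rfl, rfl, rfl⟩
  have hE0sq : E₀ ^ 2 = (v0 - w0) ^ 2 + (v1 - w1) ^ 2 := by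
    rw [hE₀, hn]; rw [sub0, sub0, hv0, hv1, hw0, hw1]
  have hE1sq : E₁ ^ 2 = (w0 - u0) ^ 2 + (w1 - u1) ^ 2 := by
    rw [hE₁, hn]; rw [sub0, sub0, hw0, hw1, hu0, hu1]
  have hE2sq : E₂ ^ 2 = (u0 - v0) ^ 2 + (u1 - v1) ^ 2 := by
    rw [hE₂, hn]; rw [sub0, sub0, hu0, hu1, hv0, hv1]
  have hE0nn : 0 ≤ E₀ := hE₀ ▸ norm_nonneg _
  have hE1nn : 0 ≤ E₁ := hE₁ ▸ norm_nonneg _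
  have hE2nn : 0 ≤ E₂ := hE₂ ▸ norm_nonneg _
  have h2A : 2 * A = (v0 - u0) * (w1 - v1) - (v1 - u1) * (w0 - v0) := by
    rw [hA, sub0, sub0, sub0, sub0, hu0, hu1, hv0, hv1, hw0, hw1]; ring
  clear hA hE₀ hE₁ hE₂ hn sub0 hu0 hu1 hv0 hv1 hw0 hw1
  -- Lagrange identities give pairwise products bounding twice the area
  have b01 : (2 * A) ^ 2 ≤ E₀ ^ 2 * E₁ ^ 2 := by
    have : (2 * A) ^ 2 + ((v0 - w0) * (w0 - u0) + (v1 - w1) * (w1 - u1)) ^ 2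
        = E₀ ^ 2 * E₁ ^ 2 := by
      rw [hE0sq, hE1sq]
      linear_combination (2 * A + ((v0 - w0) * (w1 - u1) - (v1 - w1) * (w0 - u0))) * h2A
    nlinarith [sq_nonneg ((v0 - w0) * (w0 - u0) + (v1 - w1) * (w1 - u1))]
  have b12 : (2 * A) ^ 2 ≤ E₁ ^ 2 * E₂ ^ 2 := by
    have : (2 * A) ^ 2 + ((w0 - u0) * (u0 - v0) + (w1 - u1) * (u1 - v1)) ^ 2
        = E₁ ^ 2 * E₂ ^ 2 := by
      rw [hE1sq, hE2sq]
      linear_combination (2 * A + ((w0 - u0) * (u1 - v1) - (w1 - u1) * (u0 - v0))) * h2A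
    nlinarith [sq_nonneg ((w0 - u0) * (u0 - v0) + (w1 - u1) * (u1 - v1))]
  have b02 : (2 * A) ^ 2 ≤ E₀ ^ 2 * E₂ ^ 2 := by
    have : (2 * A) ^ 2 + ((u0 - v0) * (v0 - w0) + (u1 - v1) * (v1 - w1)) ^ 2
        = E₂ ^ 2 * E₀ ^ 2 := by
      rw [hE2sq, hE0sq]
      linear_combination (2 * A + ((u0 - v0) * (v1 - w1) - (u1 - v1) * (v0 - w0))) * h2A
    nlinarith [sq_nonneg ((u0 - v0) * (v0 - w0) + (u1 - v1) * (v1 - w1))]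
  clear hE0sq hE1sq hE2sq h2A
  have h01 : 2 * A ≤ E₀ * E₁ := by nlinarith [b01, mul_nonneg hE0nn hE1nn, hApos]
  have h12 : 2 * A ≤ E₁ * E₂ := by nlinarith [b12, mul_nonneg hE1nn hE2nn, hApos]
  have h02 : 2 * A ≤ E₀ * E₂ := by nlinarith [b02, mul_nonneg hE0nn hE2nn, hApos]
  have hsum : 0 < E₀ ^ 2 + E₁ ^ 2 + E₂ ^ 2 := by nlinarith [sq_nonneg (E₀ - E₁)]
  have h3 : Real.sqrt 3 * Real.sqrt 3 = 3 := Real.mul_self_sqrt (by norm_num)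
  have h3pos : (0:ℝ) < Real.sqrt 3 := Real.sqrt_pos.2 (by norm_num)
  have hq' : 2 * Real.sqrt 3 * q = (E₀ ^ 2 + E₁ ^ 2 + E₂ ^ 2) / (2 * A) := by
    rw [hq]; field_simp; ring
  have key : ∀ Eℓ : ℝ, 0 ≤ Eℓ →
      2 * A * max E₀ (max E₁ E₂) ≤ Eℓ * (E₀ ^ 2 + E₁ ^ 2 + E₂ ^ 2) →
      max E₀ (max E₁ E₂) / (2 * Real.sqrt 3 * q) ≤ Eℓ := by
    intro Eℓ hEℓ h
    rw [hq', div_div_eq_mul_div, div_le_iff₀ (by positivity)]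
    nlinarith [h]
  have k1 := mul_le_mul_of_nonneg_right h01 hE0nn
  have k2 := mul_le_mul_of_nonneg_right h01 hE1nn
  have k3 := mul_le_mul_of_nonneg_right h12 hE1nn
  have k4 := mul_le_mul_of_nonneg_right h12 hE2nn
  have k5 := mul_le_mul_of_nonneg_right h02 hE0nn
  have k6 := mul_le_mul_of_nonneg_right h02 hE2nn
  have k7 := mul_le_mul_of_nonneg_right h12 hE0nn
  have k8 := mul_le_mul_of_nonneg_right h01 hE2nn
  have k9 := mul_le_mul_of_nonneg_right h02 hE1nn
  refine ⟨key E₀ hE0nn ?_, key E₁ hE1nn ?_, key E₂ hE2nn ?_⟩ <;>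
  · rcases max_cases E₁ E₂ with ⟨h12', _⟩ | ⟨h12', _⟩ <;>
      rcases max_cases E₀ (max E₁ E₂) with ⟨hM, _⟩ | ⟨hM, _⟩ <;>
      rw [hM] <;> try rw [h12']
    all_goals linarith [k1, k2, k3, k4, k5, k6, k7, k8, k9,
      mul_nonneg hE0nn (sq_nonneg E₀), mul_nonneg hE0nn (sq_nonneg E₁),
      mul_nonneg hE0nn (sq_nonneg E₂), mul_nonneg hE1nn (sq_nonneg E₀),
      mul_nonneg hE1nn (sq_nonneg E₁), mul_nonneg hE1nn (sq_nonneg E₂),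
      mul_nonneg hE2nn (sq_nonneg E₀), mul_nonneg hE2nn (sq_nonneg E₁),
      mul_nonneg hE2nn (sq_nonneg E₂),
      mul_nonneg hE0nn (sq_nonneg (E₁ - E₂)), mul_nonneg hE1nn (sq_nonneg (E₀ - E₂)),
      mul_nonneg hE2nn (sq_nonneg (E₀ - E₁))]
end
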